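/- arXiv:2603.07239 — 5 statements merged into one kernel-verified Lean document; each statement's English description precedes it below -/
import Mathlib

section
/- Let θ be a real alternating n×n matrix and 𝒜 a real symmetric n×n matrix with I_n + (1/(2π))·θ𝒜 invertible, and set 𝒜^θ := 𝒜(I_n + (1/(2π))θ𝒜)⁻¹. Then (1/(2π))²·𝒜^θ θ (𝒜^θ)ᵗ + (1/(2π))·𝒜^θ − (1/(2π))·(𝒜^θ)ᵗ = −(1/(2π))²·𝒜^θ θ (𝒜^θ)ᵗ. -/
open Matrix Real

theorem Atheta_cocycle_identity {n : ℕ} (θ 𝒜 : Matrix (Fin n) (Fin n) ℝ)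
    (hθ : θᵀ = -θ) (h𝒜 : 𝒜ᵀ = 𝒜)
    (h : IsUnit ((1 : Matrix (Fin n) (Fin n) ℝ) + (1 / (2 * π)) • (θ * 𝒜))) :
    ((1 / (2 * π)) ^ 2) •
        ((𝒜 * ((1 : Matrix (Fin n) (Fin n) ℝ) + (1 / (2 * π)) • (θ * 𝒜))⁻¹) * θ *
          (𝒜 * ((1 : Matrix (Fin n) (Fin n) ℝ) + (1 / (2 * π)) • (θ * 𝒜))⁻¹)ᵀ) +
      (1 / (2 * π)) • (𝒜 * ((1 : Matrix (Fin n) (Fin n) ℝ) + (1 / (2 * π)) • (θ * 𝒜))⁻¹) -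
      (1 / (2 * π)) • (𝒜 * ((1 : Matrix (Fin n) (Fin n) ℝ) + (1 / (2 * π)) • (θ * 𝒜))⁻¹)ᵀ =
    -(((1 / (2 * π)) ^ 2) •
        ((𝒜 * ((1 : Matrix (Fin n) (Fin n) ℝ) + (1 / (2 * π)) • (θ * 𝒜))⁻¹) * θ *
          (𝒜 * ((1 : Matrix (Fin n) (Fin n) ℝ) + (1 / (2 * π)) • (θ * 𝒜))⁻¹)ᵀ)) := by
  set c : ℝ := 1 / (2 * π) with hc
  set B : Matrix (Fin n) (Fin n) ℝ := 1 + c • (θ * 𝒜) with hB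
  set C : Matrix (Fin n) (Fin n) ℝ := 1 + c • (𝒜 * θ) with hCdef
  have hBdet : IsUnit B.det := (Matrix.isUnit_iff_isUnit_det B).mp h
  have hCdet : IsUnit C.det := by
    have : C.det = B.det := by
      rw [hCdef, hB]
      have h1 : c • (𝒜 * θ) = (c • 𝒜) * θ := (smul_mul_assoc c 𝒜 θ).symm
      have h2 : c • (θ * 𝒜) = θ * (c • 𝒜) := (mul_smul_comm c θ 𝒜).symm
      rw [h1, h2, add_comm (1 : Matrix (Fin n) (Fin n) ℝ), add_comm (1 : Matrix (Fin n) (Fin n) ℝ),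
        Matrix.det_mul_add_one_comm]
    rw [this]; exact hBdet
  have hCT : IsUnit Cᵀ.det := by rwa [Matrix.det_transpose]
  have hCA : C * 𝒜 = 𝒜 * B := by
    rw [hCdef, hB, add_mul, mul_add, one_mul, mul_one, smul_mul_assoc, mul_smul_comm,
      Matrix.mul_assoc]
  have e1 : 𝒜 * B⁻¹ = C⁻¹ * 𝒜 := by
    have h1 : C⁻¹ * (C * (𝒜 * B⁻¹)) = 𝒜 * B⁻¹ := by
      rw [← Matrix.mul_assoc, Matrix.nonsing_inv_mul _ hCdet, Matrix.one_mul]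
    rw [← h1, ← Matrix.mul_assoc C, hCA, Matrix.mul_assoc,
      Matrix.mul_nonsing_inv _ hBdet, Matrix.mul_one]
  have e2 : (C⁻¹ * 𝒜)ᵀ = 𝒜 * (Cᵀ)⁻¹ := by
    rw [Matrix.transpose_mul, h𝒜, Matrix.transpose_nonsing_inv]
  rw [e1, e2]
  have hCTval : Cᵀ = 1 - c • (θ * 𝒜) := by
    rw [hCdef, Matrix.transpose_add, Matrix.transpose_one, Matrix.transpose_smul,
      Matrix.transpose_mul, hθ, h𝒜, Matrix.neg_mul, smul_neg, ← sub_eq_add_neg]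
  have key : (c ^ 2) • (𝒜 * θ * 𝒜) + c • (𝒜 * Cᵀ) - c • (C * 𝒜) + (c ^ 2) • (𝒜 * θ * 𝒜) = 0 := by
    rw [hCTval, hCdef, mul_sub, add_mul, Matrix.mul_one, Matrix.one_mul,
      mul_smul_comm, smul_mul_assoc, smul_sub, smul_add, smul_smul, ← Matrix.mul_assoc, sq]
    module
  have hA1 : C⁻¹ * 𝒜 = C⁻¹ * (𝒜 * Cᵀ) * (Cᵀ)⁻¹ := by
    rw [Matrix.mul_assoc, Matrix.mul_assoc, Matrix.mul_nonsing_inv _ hCT, Matrix.mul_one]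
  have hA2 : 𝒜 * (Cᵀ)⁻¹ = C⁻¹ * (C * 𝒜) * (Cᵀ)⁻¹ := by
    rw [← Matrix.mul_assoc, Matrix.nonsing_inv_mul _ hCdet, Matrix.one_mul]
  have t1 : C⁻¹ * 𝒜 * θ * (𝒜 * (Cᵀ)⁻¹) = C⁻¹ * (𝒜 * θ * 𝒜) * (Cᵀ)⁻¹ := by
    simp only [Matrix.mul_assoc]
  have sm : ∀ (a : ℝ) (M : Matrix (Fin n) (Fin n) ℝ),
      a • (C⁻¹ * M * (Cᵀ)⁻¹) = C⁻¹ * (a • M) * (Cᵀ)⁻¹ := by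
    intro a M
    rw [Matrix.mul_smul, Matrix.smul_mul]
  rw [eq_neg_iff_add_eq_zero]
  calc c ^ 2 • (C⁻¹ * 𝒜 * θ * (𝒜 * (Cᵀ)⁻¹)) + c • (C⁻¹ * 𝒜) - c • (𝒜 * (Cᵀ)⁻¹) +
        c ^ 2 • (C⁻¹ * 𝒜 * θ * (𝒜 * (Cᵀ)⁻¹))
      = C⁻¹ * ((c ^ 2) • (𝒜 * θ * 𝒜) + c • (𝒜 * Cᵀ) - c • (C * 𝒜) + (c ^ 2) • (𝒜 * θ * 𝒜)) *
        (Cᵀ)⁻¹ := by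
        rw [t1, hA1, hA2, sm, sm, sm]
        simp only [Matrix.add_mul, Matrix.sub_mul, Matrix.mul_add, Matrix.mul_sub]
    _ = 0 := by rw [key, Matrix.mul_zero, Matrix.zero_mul]
end

section
/- Let θ be a real alternating n×n matrix and 𝒜 a real symmetric n×n matrix with I_n + (1/(2π))·θ𝒜 invertible, and set 𝒜^θ := 𝒜(I_n + (1/(2π))θ𝒜)⁻¹. Then I_n − ((1/(2π))𝒜θ)² and I_n − ((1/(2π))θ𝒜)² are invertible and 𝒜^θ θ (𝒜^θ)ᵗ = (I_n − ((1/(2π))𝒜θ)²)⁻¹ · 𝒜θ𝒜 = 𝒜θ𝒜 · (I_n − ((1/(2π))θ𝒜)²)⁻¹. -/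
open Matrix Real

lemma aux_inv_comm {n : ℕ} {B C X Y : Matrix (Fin n) (Fin n) ℝ} (hB : IsUnit B)
    (hC : IsUnit C) (hxy : B * X = Y * C) : X * C⁻¹ = B⁻¹ * Y := by
  have hdB : IsUnit B.det := (Matrix.isUnit_iff_isUnit_det B).mp hB
  have hdC : IsUnit C.det := (Matrix.isUnit_iff_isUnit_det C).mp hC
  calc X * C⁻¹ = B⁻¹ * (B * X) * C⁻¹ := by
        rw [← Matrix.mul_assoc, Matrix.nonsing_inv_mul B hdB, Matrix.one_mul]
    _ = B⁻¹ * Y * (C * C⁻¹) := by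
        rw [hxy]; simp only [Matrix.mul_assoc]
    _ = B⁻¹ * Y := by rw [Matrix.mul_nonsing_inv C hdC, Matrix.mul_one]

theorem Atheta_theta_Atheta_transpose {n : ℕ} (θ 𝒜 : Matrix (Fin n) (Fin n) ℝ)
    (hθ : θᵀ = -θ) (h𝒜 : 𝒜ᵀ = 𝒜)
    (h : IsUnit ((1 : Matrix (Fin n) (Fin n) ℝ) + (1 / (2 * π)) • (θ * 𝒜))) :
    IsUnit ((1 : Matrix (Fin n) (Fin n) ℝ) - ((1 / (2 * π)) • (𝒜 * θ)) ^ 2) ∧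
    IsUnit ((1 : Matrix (Fin n) (Fin n) ℝ) - ((1 / (2 * π)) • (θ * 𝒜)) ^ 2) ∧
    (𝒜 * ((1 : Matrix (Fin n) (Fin n) ℝ) + (1 / (2 * π)) • (θ * 𝒜))⁻¹) * θ *
        (𝒜 * ((1 : Matrix (Fin n) (Fin n) ℝ) + (1 / (2 * π)) • (θ * 𝒜))⁻¹)ᵀ =
      ((1 : Matrix (Fin n) (Fin n) ℝ) - ((1 / (2 * π)) • (𝒜 * θ)) ^ 2)⁻¹ * (𝒜 * θ * 𝒜) ∧
    (𝒜 * ((1 : Matrix (Fin n) (Fin n) ℝ) + (1 / (2 * π)) • (θ * 𝒜))⁻¹) * θ *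
        (𝒜 * ((1 : Matrix (Fin n) (Fin n) ℝ) + (1 / (2 * π)) • (θ * 𝒜))⁻¹)ᵀ =
      (𝒜 * θ * 𝒜) * ((1 : Matrix (Fin n) (Fin n) ℝ) - ((1 / (2 * π)) • (θ * 𝒜)) ^ 2)⁻¹ := by
  set c : ℝ := 1 / (2 * π) with hc
  set u : Matrix (Fin n) (Fin n) ℝ := c • (θ * 𝒜) with hu
  set v : Matrix (Fin n) (Fin n) ℝ := c • (𝒜 * θ) with hv
  have hut : uᵀ = -v := by
    rw [hu, hv, Matrix.transpose_smul, Matrix.transpose_mul, h𝒜, hθ]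
    simp [Matrix.mul_neg]
  have hvt : vᵀ = -u := by
    rw [hu, hv, Matrix.transpose_smul, Matrix.transpose_mul, h𝒜, hθ]
    simp [Matrix.neg_mul]
  have hdet_u : IsUnit (1 + u).det := (Matrix.isUnit_iff_isUnit_det _).mp h
  have hdetv : (1 + v).det = (1 + u).det := by
    have h1 : (1 : Matrix (Fin n) (Fin n) ℝ) + v = 1 + (c • 𝒜) * θ := by
      rw [hv, Matrix.smul_mul]
    have h2 : (1 : Matrix (Fin n) (Fin n) ℝ) + u = 1 + θ * (c • 𝒜) := by
      rw [hu, Matrix.mul_smul]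
    rw [h1, h2, Matrix.det_one_add_mul_comm]
  have hdet_v : IsUnit (1 + v).det := hdetv ▸ hdet_u
  have h1v : IsUnit ((1 : Matrix (Fin n) (Fin n) ℝ) + v) :=
    (Matrix.isUnit_iff_isUnit_det _).mpr hdet_v
  have hmu : (1 : Matrix (Fin n) (Fin n) ℝ) - u = (1 + v)ᵀ := by
    rw [Matrix.transpose_add, Matrix.transpose_one, hvt, sub_eq_add_neg]
  have hmv : (1 : Matrix (Fin n) (Fin n) ℝ) - v = (1 + u)ᵀ := by
    rw [Matrix.transpose_add, Matrix.transpose_one, hut, sub_eq_add_neg]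
  have h1mu : IsUnit ((1 : Matrix (Fin n) (Fin n) ℝ) - u) := by
    rw [hmu]
    exact (Matrix.isUnit_iff_isUnit_det _).mpr (by rwa [Matrix.det_transpose])
  have h1mv : IsUnit ((1 : Matrix (Fin n) (Fin n) ℝ) - v) := by
    rw [hmv]
    exact (Matrix.isUnit_iff_isUnit_det _).mpr (by rwa [Matrix.det_transpose])
  have hfacv : (1 : Matrix (Fin n) (Fin n) ℝ) - v ^ 2 = (1 - v) * (1 + v) := by noncomm_ring
  have hfacu : (1 : Matrix (Fin n) (Fin n) ℝ) - u ^ 2 = (1 - u) * (1 + u) := by noncomm_ring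
  have hUv : IsUnit ((1 : Matrix (Fin n) (Fin n) ℝ) - v ^ 2) := by
    rw [hfacv]; exact h1mv.mul h1v
  have hUu : IsUnit ((1 : Matrix (Fin n) (Fin n) ℝ) - u ^ 2) := by
    rw [hfacu]; exact h1mu.mul h
  have hNt : (𝒜 * (1 + u)⁻¹)ᵀ = ((1 : Matrix (Fin n) (Fin n) ℝ) - v)⁻¹ * 𝒜 := by
    rw [Matrix.transpose_mul, Matrix.transpose_nonsing_inv, ← hmv, h𝒜]
  have hcomm1 : (1 + u) * θ = θ * (1 + v) := by
    rw [hu, hv]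
    simp only [Matrix.add_mul, Matrix.mul_add, Matrix.one_mul, Matrix.mul_one,
      Matrix.smul_mul, Matrix.mul_smul, Matrix.mul_assoc]
  have hNθ : θ * ((1 : Matrix (Fin n) (Fin n) ℝ) + v)⁻¹ = (1 + u)⁻¹ * θ :=
    aux_inv_comm h h1v hcomm1
  have hmulinv : ((1 : Matrix (Fin n) (Fin n) ℝ) + v)⁻¹ * (1 - v)⁻¹ =
      ((1 : Matrix (Fin n) (Fin n) ℝ) - v ^ 2)⁻¹ := by
    rw [hfacv, Matrix.mul_inv_rev]
  have hkey : (𝒜 * (1 + u)⁻¹) * θ * (𝒜 * (1 + u)⁻¹)ᵀ =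
      𝒜 * θ * ((1 : Matrix (Fin n) (Fin n) ℝ) - v ^ 2)⁻¹ * 𝒜 := by
    rw [hNt, ← hmulinv]
    calc 𝒜 * (1 + u)⁻¹ * θ * ((1 - v)⁻¹ * 𝒜)
        = 𝒜 * ((1 + u)⁻¹ * θ) * (1 - v)⁻¹ * 𝒜 := by
          simp only [Matrix.mul_assoc]
      _ = 𝒜 * (θ * (1 + v)⁻¹) * (1 - v)⁻¹ * 𝒜 := by rw [hNθ]
      _ = 𝒜 * θ * ((1 + v)⁻¹ * (1 - v)⁻¹) * 𝒜 := by simp only [Matrix.mul_assoc]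
  have hc1 : ((1 : Matrix (Fin n) (Fin n) ℝ) - v ^ 2) * (𝒜 * θ) =
      (𝒜 * θ) * (1 - v ^ 2) := by
    rw [hv]
    simp only [Matrix.sub_mul, Matrix.mul_sub, Matrix.one_mul, Matrix.mul_one,
      pow_two, Matrix.smul_mul, Matrix.mul_smul, smul_smul, Matrix.mul_assoc]
  have hg1 : (𝒜 * θ) * ((1 : Matrix (Fin n) (Fin n) ℝ) - v ^ 2)⁻¹ =
      ((1 : Matrix (Fin n) (Fin n) ℝ) - v ^ 2)⁻¹ * (𝒜 * θ) :=
    aux_inv_comm hUv hUv hc1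
  have hgoal1 : (𝒜 * (1 + u)⁻¹) * θ * (𝒜 * (1 + u)⁻¹)ᵀ =
      ((1 : Matrix (Fin n) (Fin n) ℝ) - v ^ 2)⁻¹ * (𝒜 * θ * 𝒜) := by
    rw [hkey, hg1, Matrix.mul_assoc]
  have hc2 : ((1 : Matrix (Fin n) (Fin n) ℝ) - v ^ 2) * (𝒜 * θ * 𝒜) =
      (𝒜 * θ * 𝒜) * (1 - u ^ 2) := by
    rw [hv, hu]
    simp only [Matrix.sub_mul, Matrix.mul_sub, Matrix.one_mul, Matrix.mul_one,
      pow_two, Matrix.smul_mul, Matrix.mul_smul, smul_smul, Matrix.mul_assoc]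
  have h2 : (𝒜 * θ * 𝒜) * ((1 : Matrix (Fin n) (Fin n) ℝ) - u ^ 2)⁻¹ =
      ((1 : Matrix (Fin n) (Fin n) ℝ) - v ^ 2)⁻¹ * (𝒜 * θ * 𝒜) :=
    aux_inv_comm hUv hUu hc2
  exact ⟨hUv, hUu, hgoal1, by rw [hgoal1, h2]⟩
end

section
/- Let θ be a real alternating n×n matrix and 𝒜, ℬ real symmetric n×n matrices such that I_n + (1/(2π))θ𝒜 and I_n + (1/(2π))θℬ are invertible. Set 𝒜^θ := 𝒜(I_n + (1/(2π))θ𝒜)⁻¹ and ℬ^θ := ℬ(I_n + (1/(2π))θℬ)⁻¹. Then 𝒜^θ θ (𝒜^θ)ᵗ = ℬ^θ θ (ℬ^θ)ᵗ if and only if 𝒜θ𝒜 = ℬθℬ. -/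
open Matrix Real

section Aux

variable {n : ℕ}

private lemma trans_one_add {c : ℝ} {θ M : Matrix (Fin n) (Fin n) ℝ}
    (hθ : θᵀ = -θ) (hM : Mᵀ = M) :
    ((1 : Matrix (Fin n) (Fin n) ℝ) + c • (θ * M))ᵀ = 1 - c • (M * θ) := by
  simp [Matrix.transpose_add, Matrix.transpose_smul, Matrix.transpose_mul, hθ, hM,
    Matrix.mul_neg, smul_neg, sub_eq_add_neg]

private lemma units_aux {c : ℝ} {θ M : Matrix (Fin n) (Fin n) ℝ}
    (hθ : θᵀ = -θ) (hM : Mᵀ = M)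
    (hU : IsUnit ((1 : Matrix (Fin n) (Fin n) ℝ) + c • (θ * M))) :
    IsUnit ((1 : Matrix (Fin n) (Fin n) ℝ) + c • (M * θ)) ∧
    IsUnit ((1 : Matrix (Fin n) (Fin n) ℝ) - c • (θ * M)) ∧
    IsUnit ((1 : Matrix (Fin n) (Fin n) ℝ) - c • (M * θ)) := by
  have hdet : ((1 : Matrix (Fin n) (Fin n) ℝ) + c • (M * θ)).det
      = ((1 : Matrix (Fin n) (Fin n) ℝ) + c • (θ * M)).det := by
    have := Matrix.det_one_add_mul_comm (c • M) θ
    rw [smul_mul_assoc] at this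
    rw [this, mul_smul_comm]
  have h2 : IsUnit ((1 : Matrix (Fin n) (Fin n) ℝ) + c • (M * θ)) := by
    rw [Matrix.isUnit_iff_isUnit_det, hdet, ← Matrix.isUnit_iff_isUnit_det]
    exact hU
  have h4 : IsUnit ((1 : Matrix (Fin n) (Fin n) ℝ) - c • (M * θ)) := by
    rw [← trans_one_add hθ hM, Matrix.isUnit_iff_isUnit_det, Matrix.det_transpose,
      ← Matrix.isUnit_iff_isUnit_det]
    exact hU
  have hθ' : (-θ)ᵀ = -(-θ) := by rw [Matrix.transpose_neg, hθ, neg_neg]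
  have h3 : IsUnit ((1 : Matrix (Fin n) (Fin n) ℝ) - c • (θ * M)) := by
    have h5 : ((1 : Matrix (Fin n) (Fin n) ℝ) + c • (M * θ))ᵀ = 1 - c • (θ * M) := by
      simp [Matrix.transpose_add, Matrix.transpose_smul, Matrix.transpose_mul, hθ, hM,
        Matrix.neg_mul, smul_neg, sub_eq_add_neg]
    rw [← h5, Matrix.isUnit_iff_isUnit_det, Matrix.det_transpose,
      ← Matrix.isUnit_iff_isUnit_det]
    exact h2
  exact ⟨h2, h3, h4⟩

private lemma sq_expand (a : Matrix (Fin n) (Fin n) ℝ) :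
    ((1 : Matrix (Fin n) (Fin n) ℝ) - a) * (1 + a) = 1 - a * a := by
  noncomm_ring

/-- Key formula: M^θ θ (M^θ)ᵀ = (1 - c²(MθMθ))⁻¹ MθM. -/
private lemma key_formula {c : ℝ} {θ M : Matrix (Fin n) (Fin n) ℝ}
    (hθ : θᵀ = -θ) (hM : Mᵀ = M)
    (hU : IsUnit ((1 : Matrix (Fin n) (Fin n) ℝ) + c • (θ * M))) :
    (M * ((1 : Matrix (Fin n) (Fin n) ℝ) + c • (θ * M))⁻¹) * θ *
      (M * ((1 : Matrix (Fin n) (Fin n) ℝ) + c • (θ * M))⁻¹)ᵀ =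
    ((1 : Matrix (Fin n) (Fin n) ℝ) - (c * c) • (M * θ * (M * θ)))⁻¹ * (M * θ * M) := by
  obtain ⟨h2, h3, h4⟩ := units_aux hθ hM hU
  set U : Matrix (Fin n) (Fin n) ℝ := 1 + c • (θ * M) with hUdef
  set V : Matrix (Fin n) (Fin n) ℝ := 1 - c • (M * θ) with hVdef
  set W : Matrix (Fin n) (Fin n) ℝ := 1 - c • (θ * M) with hWdef
  have hUd : IsUnit U.det := (Matrix.isUnit_iff_isUnit_det U).mp hU
  have hVd : IsUnit V.det := (Matrix.isUnit_iff_isUnit_det V).mp h4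
  have hWd : IsUnit W.det := (Matrix.isUnit_iff_isUnit_det W).mp h3
  -- transpose
  have hTrans : (M * U⁻¹)ᵀ = V⁻¹ * M := by
    rw [Matrix.transpose_mul, Matrix.transpose_nonsing_inv, hUdef, trans_one_add hθ hM, hM]
  -- θ * V⁻¹ = W⁻¹ * θ
  have hswap : θ * V⁻¹ = W⁻¹ * θ := by
    have hWV : W * θ = θ * V := by
      rw [hWdef, hVdef, Matrix.sub_mul, Matrix.mul_sub, Matrix.one_mul, Matrix.mul_one,
        smul_mul_assoc, mul_smul_comm, Matrix.mul_assoc]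
    have : W * (θ * V⁻¹) = θ := by
      rw [← Matrix.mul_assoc, hWV, Matrix.mul_nonsing_inv_cancel_right _ _ hVd]
    calc θ * V⁻¹ = W⁻¹ * (W * (θ * V⁻¹)) := by
          rw [Matrix.nonsing_inv_mul_cancel_left _ _ hWd]
      _ = W⁻¹ * θ := by rw [this]
  -- U⁻¹ * W⁻¹
  have hWU : W * U = 1 - (c * c) • (θ * M * (θ * M)) := by
    rw [hWdef, hUdef, sq_expand]
    congr 1
    rw [smul_mul_assoc, mul_smul_comm, smul_smul, Matrix.mul_assoc]
  have hUW : U⁻¹ * W⁻¹ = ((1 : Matrix (Fin n) (Fin n) ℝ) - (c * c) • (θ * M * (θ * M)))⁻¹ := by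
    rw [← Matrix.mul_inv_rev, hWU]
  -- M * (...)⁻¹ = S⁻¹ * M
  set S : Matrix (Fin n) (Fin n) ℝ := 1 - (c * c) • (M * θ * (M * θ)) with hSdef
  have hSfac : S = V * (1 + c • (M * θ)) := by
    rw [hVdef, sq_expand, hSdef]
    congr 1
    rw [smul_mul_assoc, mul_smul_comm, smul_smul, Matrix.mul_assoc]
  have hSu : IsUnit S := by rw [hSfac]; exact h4.mul h2
  have hSd : IsUnit S.det := (Matrix.isUnit_iff_isUnit_det S).mp hSu
  have hT : IsUnit ((1 : Matrix (Fin n) (Fin n) ℝ) - (c * c) • (θ * M * (θ * M))).det := by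
    rw [← hWU]; exact ((Matrix.isUnit_iff_isUnit_det _).mp (h3.mul hU))
  have hMS : M * ((1 : Matrix (Fin n) (Fin n) ℝ) - (c * c) • (θ * M * (θ * M)))⁻¹
      = S⁻¹ * M := by
    have hcomm : S * M = M * ((1 : Matrix (Fin n) (Fin n) ℝ) - (c * c) • (θ * M * (θ * M))) := by
      rw [hSdef, Matrix.sub_mul, Matrix.mul_sub, Matrix.one_mul, Matrix.mul_one,
        smul_mul_assoc, mul_smul_comm]
      congr 2
      simp only [Matrix.mul_assoc]
    have : S * (M * ((1 : Matrix (Fin n) (Fin n) ℝ) - (c * c) • (θ * M * (θ * M)))⁻¹) = M := by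
      rw [← Matrix.mul_assoc, hcomm, Matrix.mul_nonsing_inv_cancel_right _ _ hT]
    calc M * ((1 : Matrix (Fin n) (Fin n) ℝ) - (c * c) • (θ * M * (θ * M)))⁻¹
        = S⁻¹ * (S * (M * ((1 : Matrix (Fin n) (Fin n) ℝ) - (c * c) • (θ * M * (θ * M)))⁻¹)) := by
          rw [Matrix.nonsing_inv_mul_cancel_left _ _ hSd]
      _ = S⁻¹ * M := by rw [this]
  calc (M * U⁻¹) * θ * (M * U⁻¹)ᵀ
      = M * U⁻¹ * θ * (V⁻¹ * M) := by rw [hTrans]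
    _ = M * (U⁻¹ * (θ * V⁻¹)) * M := by simp only [Matrix.mul_assoc]
    _ = M * (U⁻¹ * (W⁻¹ * θ)) * M := by rw [hswap]
    _ = M * (U⁻¹ * W⁻¹) * θ * M := by simp only [Matrix.mul_assoc]
    _ = M * ((1 : Matrix (Fin n) (Fin n) ℝ) - (c * c) • (θ * M * (θ * M)))⁻¹ * θ * M := by
        rw [hUW]
    _ = S⁻¹ * M * θ * M := by rw [hMS]
    _ = S⁻¹ * (M * θ * M) := by simp only [Matrix.mul_assoc]

/-- From (1 - d PΘ)⁻¹ P = (1 - d QΘ)⁻¹ Q conclude P = Q. -/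
private lemma converse_aux {d : ℝ} {θ P Q : Matrix (Fin n) (Fin n) ℝ}
    (hP : IsUnit ((1 : Matrix (Fin n) (Fin n) ℝ) - d • (P * θ)))
    (hQ : IsUnit ((1 : Matrix (Fin n) (Fin n) ℝ) - d • (Q * θ)))
    (h : ((1 : Matrix (Fin n) (Fin n) ℝ) - d • (P * θ))⁻¹ * P
        = ((1 : Matrix (Fin n) (Fin n) ℝ) - d • (Q * θ))⁻¹ * Q) :
    P = Q := by
  set X : Matrix (Fin n) (Fin n) ℝ := ((1 : Matrix (Fin n) (Fin n) ℝ) - d • (P * θ))⁻¹ * P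
    with hX
  have hPd : IsUnit ((1 : Matrix (Fin n) (Fin n) ℝ) - d • (P * θ)).det :=
    (Matrix.isUnit_iff_isUnit_det _).mp hP
  have hQd : IsUnit ((1 : Matrix (Fin n) (Fin n) ℝ) - d • (Q * θ)).det :=
    (Matrix.isUnit_iff_isUnit_det _).mp hQ
  have hPX : ((1 : Matrix (Fin n) (Fin n) ℝ) - d • (P * θ)) * X = P := by
    rw [hX, Matrix.mul_nonsing_inv_cancel_left _ _ hPd]
  have hQX : ((1 : Matrix (Fin n) (Fin n) ℝ) - d • (Q * θ)) * X = Q := by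
    rw [h, Matrix.mul_nonsing_inv_cancel_left _ _ hQd]
  -- rearrange: P + d•(P*(θ*X)) = X
  have hrearr : ∀ R : Matrix (Fin n) (Fin n) ℝ,
      ((1 : Matrix (Fin n) (Fin n) ℝ) - d • (R * θ)) * X = R →
      R + d • (R * (θ * X)) = X := by
    intro R hR
    rw [Matrix.sub_mul, Matrix.one_mul, smul_mul_assoc, Matrix.mul_assoc] at hR
    exact eq_sub_iff_add_eq.mp hR.symm
  have hP2 := hrearr P hPX
  have hQ2 := hrearr Q hQX
  -- 1 + d•(θ*X) is a unit
  have hone : ((1 : Matrix (Fin n) (Fin n) ℝ) - d • (θ * P)) *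
      (1 + d • (θ * X)) = 1 := by
    have hZ : θ * P + d • (θ * (P * (θ * X))) = θ * X := by
      rw [← mul_smul_comm, ← Matrix.mul_add, hP2]
    have h2 : d • (θ * P) + (d * d) • (θ * (P * (θ * X))) = d • (θ * X) := by
      rw [← smul_smul, ← smul_add, hZ]
    simp only [Matrix.sub_mul, Matrix.mul_add, Matrix.mul_sub, Matrix.one_mul,
      Matrix.mul_one, smul_mul_assoc, mul_smul_comm, smul_smul, smul_sub,
      Matrix.mul_assoc]
    rw [← h2]; abel
  have hu : IsUnit ((1 : Matrix (Fin n) (Fin n) ℝ) + d • (θ * X)) :=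
    ⟨⟨1 + d • (θ * X), 1 - d • (θ * P), mul_eq_one_comm.mp hone, hone⟩, rfl⟩
  have hud : IsUnit ((1 : Matrix (Fin n) (Fin n) ℝ) + d • (θ * X)).det :=
    (Matrix.isUnit_iff_isUnit_det _).mp hu
  have hPmul : P * ((1 : Matrix (Fin n) (Fin n) ℝ) + d • (θ * X)) = X := by
    rw [Matrix.mul_add, Matrix.mul_one, mul_smul_comm]
    exact hP2
  have hQmul : Q * ((1 : Matrix (Fin n) (Fin n) ℝ) + d • (θ * X)) = X := by
    rw [Matrix.mul_add, Matrix.mul_one, mul_smul_comm]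
    exact hQ2
  have e1 : P = X * ((1 : Matrix (Fin n) (Fin n) ℝ) + d • (θ * X))⁻¹ := by
    have h3 := Matrix.mul_nonsing_inv_cancel_right
      ((1 : Matrix (Fin n) (Fin n) ℝ) + d • (θ * X)) P hud
    rw [hPmul] at h3
    exact h3.symm
  have e2 : Q = X * ((1 : Matrix (Fin n) (Fin n) ℝ) + d • (θ * X))⁻¹ := by
    have h3 := Matrix.mul_nonsing_inv_cancel_right
      ((1 : Matrix (Fin n) (Fin n) ℝ) + d • (θ * X)) Q hud
    rw [hQmul] at h3
    exact h3.symm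
  exact e1.trans e2.symm

end Aux

theorem Atheta_eq_iff_AthetaA_eq {n : ℕ} (θ 𝒜 ℬ : Matrix (Fin n) (Fin n) ℝ)
    (hθ : θᵀ = -θ) (h𝒜 : 𝒜ᵀ = 𝒜) (hℬ : ℬᵀ = ℬ)
    (hA : IsUnit ((1 : Matrix (Fin n) (Fin n) ℝ) + (1 / (2 * π)) • (θ * 𝒜)))
    (hB : IsUnit ((1 : Matrix (Fin n) (Fin n) ℝ) + (1 / (2 * π)) • (θ * ℬ))) :
    (𝒜 * ((1 : Matrix (Fin n) (Fin n) ℝ) + (1 / (2 * π)) • (θ * 𝒜))⁻¹) * θ *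
        (𝒜 * ((1 : Matrix (Fin n) (Fin n) ℝ) + (1 / (2 * π)) • (θ * 𝒜))⁻¹)ᵀ =
      (ℬ * ((1 : Matrix (Fin n) (Fin n) ℝ) + (1 / (2 * π)) • (θ * ℬ))⁻¹) * θ *
        (ℬ * ((1 : Matrix (Fin n) (Fin n) ℝ) + (1 / (2 * π)) • (θ * ℬ))⁻¹)ᵀ ↔
      𝒜 * θ * 𝒜 = ℬ * θ * ℬ := by
  set c : ℝ := 1 / (2 * π) with hc
  rw [key_formula hθ h𝒜 hA, key_formula hθ hℬ hB]
  have hassocA : 𝒜 * θ * (𝒜 * θ) = (𝒜 * θ * 𝒜) * θ := by simp only [Matrix.mul_assoc]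
  have hassocB : ℬ * θ * (ℬ * θ) = (ℬ * θ * ℬ) * θ := by simp only [Matrix.mul_assoc]
  constructor
  · intro h
    obtain ⟨hA2, hA3, hA4⟩ := units_aux hθ h𝒜 hA
    obtain ⟨hB2, hB3, hB4⟩ := units_aux hθ hℬ hB
    have hPu : IsUnit ((1 : Matrix (Fin n) (Fin n) ℝ) - (c * c) • ((𝒜 * θ * 𝒜) * θ)) := by
      rw [← hassocA]
      have : (1 : Matrix (Fin n) (Fin n) ℝ) - (c * c) • (𝒜 * θ * (𝒜 * θ))
          = (1 - c • (𝒜 * θ)) * (1 + c • (𝒜 * θ)) := by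
        rw [sq_expand]; congr 1
        rw [smul_mul_assoc, mul_smul_comm, smul_smul]
      rw [this]; exact hA4.mul hA2
    have hQu : IsUnit ((1 : Matrix (Fin n) (Fin n) ℝ) - (c * c) • ((ℬ * θ * ℬ) * θ)) := by
      rw [← hassocB]
      have : (1 : Matrix (Fin n) (Fin n) ℝ) - (c * c) • (ℬ * θ * (ℬ * θ))
          = (1 - c • (ℬ * θ)) * (1 + c • (ℬ * θ)) := by
        rw [sq_expand]; congr 1
        rw [smul_mul_assoc, mul_smul_comm, smul_smul]
      rw [this]; exact hB4.mul hB2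
    refine converse_aux hPu hQu ?_
    rw [hassocA, hassocB] at h
    exact h
  · intro h
    rw [hassocA, hassocB, h]
end

section
/- Let m be a nonzero integer, c := (1 + √(1+m²))/(2m), θ := c·[[0,1],[−1,0]] and 𝒜 := 4π·[[0,1],[1,0]] (2×2 real matrices). Then det(I₂ + (1/(2π))θ𝒜) = (−2 − 2√(1+m²))/m² ≠ 0, and with 𝒜^θ := 𝒜(I₂ + (1/(2π))θ𝒜)⁻¹ one has (1/(2π))²·𝒜^θ θ (𝒜^θ)ᵗ = [[0,m],[−m,0]]. -/
/-!
Write `J = !![0, 1; -1, 0]` and `θ = c • J`. Since `J * !![0, 1; 1, 0] = diag(1, -1)`, the matrix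
`M = 1 + θ𝒜/(2π)` is `diag(1 + 2c, 1 - 2c)`, with determinant `1 - 4c²`. Every `2 × 2` matrix
`A` satisfies `A J Aᵀ = det A • J`, so with `A = 𝒜 M⁻¹` the conjugated matrix is
`(2π)⁻² c (det 𝒜 / det M) • J = (-4c / (1 - 4c²)) • J`, and `c` is exactly the root of
`m (1 - 4c²) = -4c` that makes this coefficient equal to `m`.
-/

open Matrix Real

noncomputable def thetaEx (m : ℤ) : Matrix (Fin 2) (Fin 2) ℝ :=
  ((1 + Real.sqrt (1 + (m : ℝ) ^ 2)) / (2 * (m : ℝ))) • !![0, 1; -1, 0]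

noncomputable def calAEx : Matrix (Fin 2) (Fin 2) ℝ :=
  (4 * Real.pi) • !![0, 1; 1, 0]

theorem Matrix.mul_mul_transpose_fin_two_symplectic {R : Type*} [CommRing R]
    (A : Matrix (Fin 2) (Fin 2) R) :
    A * !![0, 1; -1, 0] * Aᵀ = A.det • !![0, 1; -1, 0] := by
  ext i j
  fin_cases i <;> fin_cases j <;> simp [mul_apply, Fin.sum_univ_two, det_fin_two] <;> ring

theorem det_calAEx : calAEx.det = -(4 * π) ^ 2 := by
  simp only [calAEx, smul_of, smul_cons, smul_eq_mul, mul_zero, mul_one, smul_empty,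
    det_fin_two_of]
  ring

theorem one_add_smul_mul_calAEx (c : ℝ) :
    (1 : Matrix (Fin 2) (Fin 2) ℝ) + (1 / (2 * π)) • ((c • !![0, 1; -1, 0]) * calAEx) =
      !![1 + 2 * c, 0; 0, 1 - 2 * c] := by
  have hJS : !![0, 1; -1, 0] * !![0, 1; 1, 0] = (!![1, 0; 0, -1] : Matrix (Fin 2) (Fin 2) ℝ) := by
    simp
  have hcoeff : 1 / (2 * π) * (c * (4 * π)) = 2 * c := by
    field_simp [pi_ne_zero]
    ring
  rw [calAEx, smul_mul_smul_comm, hJS, smul_smul, hcoeff, one_fin_two]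
  ext i j
  fin_cases i <;> fin_cases j <;> simp [sub_eq_add_neg]

noncomputable def thetaCoeff (m : ℝ) : ℝ := (1 + √(1 + m ^ 2)) / (2 * m)

theorem one_sub_four_mul_thetaCoeff_sq {m : ℝ} (hm : m ≠ 0) :
    1 - 4 * thetaCoeff m ^ 2 = (-2 - 2 * √(1 + m ^ 2)) / m ^ 2 := by
  have hs : √(1 + m ^ 2) ^ 2 = 1 + m ^ 2 := sq_sqrt (by positivity)
  rw [thetaCoeff]
  field_simp
  linear_combination (-4) * hs

theorem mul_one_sub_four_mul_thetaCoeff_sq {m : ℝ} (hm : m ≠ 0) :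
    m * (1 - 4 * thetaCoeff m ^ 2) = -4 * thetaCoeff m := by
  have hs : √(1 + m ^ 2) ^ 2 = 1 + m ^ 2 := sq_sqrt (by positivity)
  rw [thetaCoeff]
  field_simp
  linear_combination (-4) * hs

theorem example_nontrivial_pair (m : ℤ) (hm : m ≠ 0) :
    ((1 : Matrix (Fin 2) (Fin 2) ℝ) + (1 / (2 * π)) • (thetaEx m * calAEx)).det =
      (-2 - 2 * Real.sqrt (1 + (m : ℝ) ^ 2)) / (m : ℝ) ^ 2 ∧
    ((1 : Matrix (Fin 2) (Fin 2) ℝ) + (1 / (2 * π)) • (thetaEx m * calAEx)).det ≠ 0 ∧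
    ((1 / (2 * π)) ^ 2) •
        ((calAEx * ((1 : Matrix (Fin 2) (Fin 2) ℝ) + (1 / (2 * π)) • (thetaEx m * calAEx))⁻¹) *
          thetaEx m *
          (calAEx * ((1 : Matrix (Fin 2) (Fin 2) ℝ) + (1 / (2 * π)) • (thetaEx m * calAEx))⁻¹)ᵀ) =
      !![0, (m : ℝ); -(m : ℝ), 0] := by
  have hm' : (m : ℝ) ≠ 0 := Int.cast_ne_zero.mpr hm
  have hθ : thetaEx m = thetaCoeff m • !![0, 1; -1, 0] := rfl
  set M := (1 : Matrix (Fin 2) (Fin 2) ℝ) + (1 / (2 * π)) • (thetaEx m * calAEx)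
  have hdet : M.det = 1 - 4 * thetaCoeff m ^ 2 := by
    rw [show M = _ from one_add_smul_mul_calAEx (thetaCoeff m), det_fin_two_of]
    ring
  have hdet_ne : M.det ≠ 0 := by
    rw [hdet, one_sub_four_mul_thetaCoeff_sq hm']
    have := sqrt_nonneg (1 + (m : ℝ) ^ 2)
    exact div_ne_zero (by linarith) (by positivity)
  refine ⟨hdet.trans (one_sub_four_mul_thetaCoeff_sq hm'), hdet_ne, ?_⟩
  rw [hθ, Matrix.mul_smul, Matrix.smul_mul, mul_mul_transpose_fin_two_symplectic, smul_smul,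
    smul_smul, det_mul, det_nonsing_inv, Ring.inverse_eq_inv', det_calAEx]
  have hcoeff : (1 / (2 * π)) ^ 2 * thetaCoeff m * (-(4 * π) ^ 2 * M.det⁻¹) = m :=
    calc (1 / (2 * π)) ^ 2 * thetaCoeff m * (-(4 * π) ^ 2 * M.det⁻¹)
        = -4 * thetaCoeff m / M.det := by field_simp [pi_ne_zero]; ring
      _ = m := by rw [div_eq_iff hdet_ne, hdet, mul_one_sub_four_mul_thetaCoeff_sq hm']
  rw [hcoeff]
  ext i j
  fin_cases i <;> fin_cases j <;> simp
end

section
/- Let X, Y be real n×n matrices with Y invertible and Y + XY⁻¹X invertible, let τ be a real alternating n×n matrix, and set I_T := [[−XY⁻¹, −Y − XY⁻¹X],[Y⁻¹, Y⁻¹X]] and B_τ := [[τ, 0],[0, 0]] (2n×2n block matrices). Then B_τ·I_T + I_Tᵗ·B_τ = 0 if and only if τ = 0. -/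
open Matrix Real

theorem B_field_preserves_iff {n : ℕ} (X Y τ : Matrix (Fin n) (Fin n) ℝ)
    (hY : IsUnit Y) (hYX : IsUnit (Y + X * Y⁻¹ * X)) (hτ : τᵀ = -τ) :
    Matrix.fromBlocks τ 0 0 0 *
        Matrix.fromBlocks (-(X * Y⁻¹)) (-(Y + X * Y⁻¹ * X)) (Y⁻¹) (Y⁻¹ * X) +
      (Matrix.fromBlocks (-(X * Y⁻¹)) (-(Y + X * Y⁻¹ * X)) (Y⁻¹) (Y⁻¹ * X))ᵀ *
        Matrix.fromBlocks τ 0 0 0 = 0 ↔ τ = 0 := by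
  constructor
  · intro h
    have h12 := congrArg Matrix.toBlocks₁₂ h
    simp [Matrix.fromBlocks_transpose, Matrix.fromBlocks_multiply,
      Matrix.fromBlocks_add, Matrix.toBlocks_fromBlocks₁₂, Matrix.toBlocks₁₂] at h12
    have hz' : τ * (-(X * Y⁻¹ * X) + -Y) = 0 := by
      ext i j; exact congrFun (congrFun h12 i) j
    have hz : τ * (Y + X * Y⁻¹ * X) = 0 := by
      have he : Y + X * Y⁻¹ * X = -(-(X * Y⁻¹ * X) + -Y) := by abel
      rw [he, mul_neg, hz', neg_zero]
    have hinv := Matrix.mul_nonsing_inv _ ((Matrix.isUnit_iff_isUnit_det _).mp hYX)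
    have h2 : τ * ((Y + X * Y⁻¹ * X) * (Y + X * Y⁻¹ * X)⁻¹) = 0 := by
      rw [← mul_assoc, hz, Matrix.zero_mul]
    rwa [hinv, mul_one] at h2
  · intro h
    subst h
    simp
end
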